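/- Let ν > 0, γ > 0, T > 0 and suppose ω : [0,T) × Ω → ℝ is a smooth solution of the heat equation ω_t = ν Δω on Ω = (0,a)² × (0,∞), vanishing on ∂Ω ∖ Γ, satisfying the Robin condition ω_z + γω = 0 on Γ = {z = 0}, and decaying to zero together with its gradient as z → ∞. Then for all t ∈ [0,T): (1/2) d/dt ∫_Ω ω² ≤ -(ν/2) ∫_Ω |∇ω|² + 2νγ² ∫_Ω ω². -/

import Mathlib

open MeasureTheory Set Real Filter

noncomputable section

/-- Partial derivative of `f : ℝ³ → ℝ` in the `i`-th coordinate direction. -/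
def pd (i : Fin 3) (f : EuclideanSpace ℝ (Fin 3) → ℝ) (p : EuclideanSpace ℝ (Fin 3)) : ℝ :=
  deriv (fun s : ℝ => f (p + s • EuclideanSpace.single i (1 : ℝ))) 0

/-- Laplacian of `f : ℝ³ → ℝ`. -/
def lap (f : EuclideanSpace ℝ (Fin 3) → ℝ) (p : EuclideanSpace ℝ (Fin 3)) : ℝ :=
  ∑ i : Fin 3, pd i (pd i f) p

/-- Squared norm of the gradient of `f : ℝ³ → ℝ`. -/
def gradSq (f : EuclideanSpace ℝ (Fin 3) → ℝ) (p : EuclideanSpace ℝ (Fin 3)) : ℝ :=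
  ∑ i : Fin 3, (pd i f p) ^ 2

/-- The semi-infinite box `Ω = (0,a)² × (0,∞)`. -/
def box (a : ℝ) : Set (EuclideanSpace ℝ (Fin 3)) :=
  {p | p 0 ∈ Ioo 0 a ∧ p 1 ∈ Ioo 0 a ∧ p 2 ∈ Ioi 0}

/-- The bottom face `Γ = (0,a)² × {0}`. -/
def bot (a : ℝ) : Set (EuclideanSpace ℝ (Fin 3)) :=
  {p | p 0 ∈ Ioo 0 a ∧ p 1 ∈ Ioo 0 a ∧ p 2 = 0}

open Topology
open scoped ENNReal

namespace Stmt4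

abbrev Eu := EuclideanSpace ℝ (Fin 3)

lemma pd_eq {f : Eu → ℝ} (hf : Differentiable ℝ f) (i : Fin 3) (p : Eu) :
    pd i f p = fderiv ℝ f p (EuclideanSpace.single i 1) := by
  have h1 : HasDerivAt (fun s : ℝ => p + s • EuclideanSpace.single i (1 : ℝ))
      (EuclideanSpace.single i 1) 0 := by
    simpa using ((hasDerivAt_id (0 : ℝ)).smul_const (EuclideanSpace.single i (1 : ℝ))).const_add p
  have h2 : HasDerivAt (fun s : ℝ => f (p + s • EuclideanSpace.single i (1 : ℝ)))
      (fderiv ℝ f (p + (0:ℝ) • EuclideanSpace.single i (1:ℝ)) (EuclideanSpace.single i 1)) 0 :=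
    ((hf _).hasFDerivAt).comp_hasDerivAt 0 h1
  rw [pd, h2.deriv]
  simp

lemma pd_smooth {f : Eu → ℝ} (hf : ContDiff ℝ (⊤ : ℕ∞) f) (i : Fin 3) : ContDiff ℝ (⊤ : ℕ∞) (pd i f) := by
  have : pd i f = fun p => fderiv ℝ f p (EuclideanSpace.single i 1) :=
    funext fun p => pd_eq (hf.differentiable (by simp)) i p
  rw [this]
  exact (hf.fderiv_right (by simp)).clm_apply contDiff_const

lemma pd_mul {f g : Eu → ℝ} (hf : ContDiff ℝ (⊤ : ℕ∞) f) (hg : ContDiff ℝ (⊤ : ℕ∞) g) (i : Fin 3) (p : Eu) :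
    pd i (fun q => f q * g q) p = pd i f p * g p + f p * pd i g p := by
  rw [pd_eq ((hf.mul hg).differentiable (by simp)) i p,
    fderiv_fun_mul ((hf.differentiable (by simp)) p) ((hg.differentiable (by simp)) p)]
  simp [pd_eq (hf.differentiable (by simp)) i p, pd_eq (hg.differentiable (by simp)) i p]
  ring

lemma pd_const_mul {g : Eu → ℝ} (hg : ContDiff ℝ (⊤ : ℕ∞) g) (c : ℝ) (i : Fin 3) (p : Eu) :
    pd i (fun q => c * g q) p = c * pd i g p := by
  have h := pd_mul (f := fun _ : Eu => c) contDiff_const hg i p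
  have hc : pd i (fun _ : Eu => c) p = 0 := by
    rw [pd_eq (differentiable_const c) i p]; simp
  simpa [hc] using h

lemma sq_pd_le_gradSq (f : Eu → ℝ) (i : Fin 3) (p : Eu) : (pd i f p) ^ 2 ≤ gradSq f p := by
  exact Finset.single_le_sum (f := fun j => (pd j f p) ^ 2)
    (fun j _ => sq_nonneg _) (Finset.mem_univ i)

lemma gradSq_nonneg (f : Eu → ℝ) (p : Eu) : 0 ≤ gradSq f p :=
  Finset.sum_nonneg fun j _ => sq_nonneg _

lemma continuous_gradSq {f : Eu → ℝ} (hf : ContDiff ℝ (⊤ : ℕ∞) f) : Continuous (gradSq f) := by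
  have : gradSq f = fun p => ∑ i : Fin 3, (pd i f p) ^ 2 := rfl
  rw [this]
  exact continuous_finset_sum _ fun i _ => ((pd_smooth hf i).continuous).pow 2

lemma continuous_lap {f : Eu → ℝ} (hf : ContDiff ℝ (⊤ : ℕ∞) f) : Continuous (lap f) := by
  have : lap f = fun p => ∑ i : Fin 3, pd i (pd i f) p := rfl
  rw [this]
  exact continuous_finset_sum _ fun i _ => (pd_smooth (pd_smooth hf i) i).continuous


/-! ### Coordinates and the pi-space picture -/

def LE : (Fin 3 → ℝ) ≃L[ℝ] EuclideanSpace ℝ (Fin 3) :=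
  (PiLp.continuousLinearEquiv 2 ℝ (fun _ : Fin 3 => ℝ)).symm

lemma LE_apply (x : Fin 3 → ℝ) (i : Fin 3) : LE x i = x i := rfl

lemma LE_single (i : Fin 3) : LE (Pi.single i 1) = EuclideanSpace.single i (1 : ℝ) := by
  ext j
  rw [LE_apply]
  simp [EuclideanSpace.single_apply, Pi.single_apply]

lemma LE_symm_apply (p : EuclideanSpace ℝ (Fin 3)) (i : Fin 3) : LE.symm p i = p i := rfl

lemma coe_measurableEquiv_symm :
    ⇑(MeasurableEquiv.toLp 2 (Fin 3 → ℝ)) = ⇑LE := rfl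

def ebox (a : ℝ) : Set (Fin 3 → ℝ) := {x | x 0 ∈ Ioo 0 a ∧ x 1 ∈ Ioo 0 a ∧ x 2 ∈ Ioi 0}

lemma LE_preimage_box (a : ℝ) : ⇑LE ⁻¹' (box a) = ebox a := rfl

lemma ebox_eq_pi (a : ℝ) : ebox a = Set.pi univ ![Ioo 0 a, Ioo 0 a, Ioi 0] := by
  ext x
  simp only [ebox, mem_setOf_eq, mem_univ_pi]
  constructor
  · rintro ⟨h0, h1, h2⟩ i; fin_cases i <;> simpa
  · intro h
    exact ⟨by simpa using h 0, by simpa using h 1, by simpa using h 2⟩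

lemma measurableSet_ebox (a : ℝ) : MeasurableSet (ebox a) := by
  rw [ebox_eq_pi]
  refine MeasurableSet.univ_pi fun i => ?_
  fin_cases i <;> simp [measurableSet_Ioo, measurableSet_Ioi]

lemma isOpen_box (a : ℝ) : IsOpen (box a) := by
  have : box a = (LE.symm : EuclideanSpace ℝ (Fin 3) → (Fin 3 → ℝ)) ⁻¹' (ebox a) := rfl
  rw [this, ebox_eq_pi]
  refine (isOpen_set_pi finite_univ fun i _ => ?_).preimage LE.symm.continuous
  fin_cases i <;> simp [isOpen_Ioo, isOpen_Ioi]

lemma measurableSet_box (a : ℝ) : MeasurableSet (box a) := (isOpen_box a).measurableSet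

lemma closure_box {a : ℝ} (ha : 0 < a) :
    closure (box a) = {p : EuclideanSpace ℝ (Fin 3) | p 0 ∈ Icc 0 a ∧ p 1 ∈ Icc 0 a ∧ p 2 ∈ Ici 0} := by
  have hbox : box a = (LE.symm.toHomeomorph) ⁻¹' (ebox a) := rfl
  rw [hbox, ← Homeomorph.preimage_closure, ebox_eq_pi, closure_pi_set]
  ext p
  simp only [mem_preimage, mem_univ_pi, mem_setOf_eq]
  constructor
  · intro h
    refine ⟨?_, ?_, ?_⟩
    · have := h 0; simpa [closure_Ioo ha.ne, LE_symm_apply] using this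
    · have := h 1; simpa [closure_Ioo ha.ne, LE_symm_apply] using this
    · have := h 2; simpa [closure_Ioi, LE_symm_apply] using this
  · rintro ⟨h0, h1, h2⟩ i
    fin_cases i
    · simpa [closure_Ioo ha.ne, LE_symm_apply] using h0
    · simpa [closure_Ioo ha.ne, LE_symm_apply] using h1
    · simpa [closure_Ioi, LE_symm_apply] using h2

lemma mem_frontier_box {a : ℝ} (ha : 0 < a) {p : EuclideanSpace ℝ (Fin 3)}
    (h0 : p 0 ∈ Icc 0 a) (h1 : p 1 ∈ Icc 0 a) (h2 : 0 ≤ p 2) (hnot : p ∉ box a) :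
    p ∈ frontier (box a) := by
  rw [frontier, (isOpen_box a).interior_eq, closure_box ha]
  exact ⟨⟨h0, h1, h2⟩, hnot⟩

/-! ### insertNth coordinates -/

lemma insertNth0 (c : ℝ) (y : Fin 2 → ℝ) :
    Fin.insertNth (α := fun _ => ℝ) (0 : Fin 3) c y = ![c, y 0, y 1] := by
  funext j
  fin_cases j
  · simpa using Fin.insertNth_apply_same (α := fun _ => ℝ) 0 c y
  · have h : (0:Fin 3).succAbove (0:Fin 2) = 1 := by decide
    have := Fin.insertNth_apply_succAbove (α := fun _ => ℝ) (i := (0:Fin 3)) (j := (0:Fin 2)) c y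
    rw [h] at this; simpa using this
  · have h : (0:Fin 3).succAbove (1:Fin 2) = 2 := by decide
    have := Fin.insertNth_apply_succAbove (α := fun _ => ℝ) (i := (0:Fin 3)) (j := (1:Fin 2)) c y
    rw [h] at this; simpa using this

lemma insertNth1 (c : ℝ) (y : Fin 2 → ℝ) :
    Fin.insertNth (α := fun _ => ℝ) (1 : Fin 3) c y = ![y 0, c, y 1] := by
  funext j
  fin_cases j
  · have h : (1:Fin 3).succAbove (0:Fin 2) = 0 := by decide
    have := Fin.insertNth_apply_succAbove (α := fun _ => ℝ) (i := (1:Fin 3)) (j := (0:Fin 2)) c y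
    rw [h] at this; simpa using this
  · simpa using Fin.insertNth_apply_same (α := fun _ => ℝ) 1 c y
  · have h : (1:Fin 3).succAbove (1:Fin 2) = 2 := by decide
    have := Fin.insertNth_apply_succAbove (α := fun _ => ℝ) (i := (1:Fin 3)) (j := (1:Fin 2)) c y
    rw [h] at this; simpa using this

lemma insertNth2 (c : ℝ) (y : Fin 2 → ℝ) :
    Fin.insertNth (α := fun _ => ℝ) (2 : Fin 3) c y = ![y 0, y 1, c] := by
  funext j
  fin_cases j
  · have h : (2:Fin 3).succAbove (0:Fin 2) = 0 := by decide
    have := Fin.insertNth_apply_succAbove (α := fun _ => ℝ) (i := (2:Fin 3)) (j := (0:Fin 2)) c y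
    rw [h] at this; simpa using this
  · have h : (2:Fin 3).succAbove (1:Fin 2) = 1 := by decide
    have := Fin.insertNth_apply_succAbove (α := fun _ => ℝ) (i := (2:Fin 3)) (j := (1:Fin 2)) c y
    rw [h] at this; simpa using this
  · simpa using Fin.insertNth_apply_same (α := fun _ => ℝ) 2 c y

/-! ### The vector field -/

def P (γ : ℝ) (u : Eu → ℝ) : Fin 3 → Eu → ℝ :=
  ![fun p => u p * pd 0 u p, fun p => u p * pd 1 u p,
    fun p => u p * pd 2 u p + γ * (u p * u p)]

def G (γ : ℝ) (u : Eu → ℝ) : Eu → ℝ :=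
  fun p => u p * lap u p + gradSq u p + 2 * γ * (u p * pd 2 u p)

lemma P_smooth {u : Eu → ℝ} (hu : ContDiff ℝ (⊤ : ℕ∞) u) (γ : ℝ) (i : Fin 3) :
    ContDiff ℝ (⊤ : ℕ∞) (P γ u i) := by
  fin_cases i
  · exact hu.mul (pd_smooth hu 0)
  · exact hu.mul (pd_smooth hu 1)
  · exact (hu.mul (pd_smooth hu 2)).add (contDiff_const.mul (hu.mul hu))

lemma continuous_G {u : Eu → ℝ} (hu : ContDiff ℝ (⊤ : ℕ∞) u) (γ : ℝ) : Continuous (G γ u) := by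
  refine Continuous.add (Continuous.add ?_ (continuous_gradSq hu)) ?_
  · exact hu.continuous.mul (continuous_lap hu)
  · exact continuous_const.mul (hu.continuous.mul (pd_smooth hu 2).continuous)

lemma pd_add {f g : Eu → ℝ} (hf : ContDiff ℝ (⊤ : ℕ∞) f) (hg : ContDiff ℝ (⊤ : ℕ∞) g) (i : Fin 3) (p : Eu) :
    pd i (fun q => f q + g q) p = pd i f p + pd i g p := by
  rw [pd_eq ((hf.add hg).differentiable (by simp)), pd_eq (hf.differentiable (by simp)),
    pd_eq (hg.differentiable (by simp)),
    fderiv_fun_add ((hf.differentiable (by simp)) p) ((hg.differentiable (by simp)) p)]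
  simp

lemma sum_pd_P {u : Eu → ℝ} (hu : ContDiff ℝ (⊤ : ℕ∞) u) (γ : ℝ) (q : Eu) :
    ∑ i : Fin 3, pd i (P γ u i) q = G γ u q := by
  have hpd2 : ContDiff ℝ (⊤ : ℕ∞) (pd 2 u) := pd_smooth hu 2
  have hp2 : pd 2 (P γ u 2) q
      = (pd 2 u q * pd 2 u q + u q * pd 2 (pd 2 u) q)
        + γ * (pd 2 u q * u q + u q * pd 2 u q) := by
    have : P γ u 2 = fun p => u p * pd 2 u p + γ * (u p * u p) := rfl
    rw [this, pd_add (hu.mul hpd2) (contDiff_const.mul (hu.mul hu)),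
      pd_mul hu hpd2, pd_const_mul (hu.mul hu), pd_mul hu hu]
  have hp0 : pd 0 (P γ u 0) q = pd 0 u q * pd 0 u q + u q * pd 0 (pd 0 u) q := by
    have : P γ u 0 = fun p => u p * pd 0 u p := rfl
    rw [this, pd_mul hu (pd_smooth hu 0)]
  have hp1 : pd 1 (P γ u 1) q = pd 1 u q * pd 1 u q + u q * pd 1 (pd 1 u) q := by
    have : P γ u 1 = fun p => u p * pd 1 u p := rfl
    rw [this, pd_mul hu (pd_smooth hu 1)]
  rw [Fin.sum_univ_three, hp0, hp1, hp2, G, lap, gradSq, Fin.sum_univ_three, Fin.sum_univ_three]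
  ring

def hiv (a R : ℝ) : Fin 3 → ℝ := fun i => if i = 2 then R else a

lemma hiv0 (a R : ℝ) : hiv a R 0 = a := rfl
lemma hiv1 (a R : ℝ) : hiv a R 1 = a := rfl
lemma hiv2 (a R : ℝ) : hiv a R 2 = R := rfl

lemma divthm (a γ R : ℝ) (ha : 0 ≤ a) (hR : 0 ≤ R) (u : Eu → ℝ) (hu : ContDiff ℝ (⊤ : ℕ∞) u)
    (hG : IntegrableOn (fun x => G γ u (LE x)) (Icc (0 : Fin 3 → ℝ) (hiv a R))) :
    ∫ x in Icc (0 : Fin 3 → ℝ) (hiv a R), G γ u (LE x)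
      = ∑ i : Fin 3,
          ((∫ y in Icc ((0 : Fin 3 → ℝ) ∘ i.succAbove) (hiv a R ∘ i.succAbove),
              P γ u i (LE (Fin.insertNth i (hiv a R i) y))) -
            ∫ y in Icc ((0 : Fin 3 → ℝ) ∘ i.succAbove) (hiv a R ∘ i.succAbove),
              P γ u i (LE (Fin.insertNth i ((0 : Fin 3 → ℝ) i) y))) := by
  have hle : (0 : Fin 3 → ℝ) ≤ hiv a R := by
    intro i
    simp only [hiv, Pi.zero_apply]
    split <;> assumption
  have hdivpt : ∀ x : Fin 3 → ℝ,
      (∑ i : Fin 3, ((fderiv ℝ (P γ u i) (LE x)).comp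
        (LE : (Fin 3 → ℝ) →L[ℝ] Eu)) (Pi.single i 1)) = G γ u (LE x) := by
    intro x
    rw [← sum_pd_P hu γ (LE x)]
    refine Finset.sum_congr rfl fun i _ => ?_
    rw [ContinuousLinearMap.comp_apply, ContinuousLinearEquiv.coe_coe, LE_single,
      pd_eq ((P_smooth hu γ i).differentiable (by simp))]
  have h := integral_divergence_of_hasFDerivAt_off_countable'
    (0 : Fin 3 → ℝ) (hiv a R) hle
    (fun i x => P γ u i (LE x))
    (fun i x => (fderiv ℝ (P γ u i) (LE x)).comp (LE : (Fin 3 → ℝ) →L[ℝ] Eu))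
    ∅ countable_empty
    (fun i => (((P_smooth hu γ i).continuous).comp LE.continuous).continuousOn)
    (fun x _ i => by
      exact
        ((((P_smooth hu γ i).differentiable (by simp)) (LE x)).hasFDerivAt.comp x LE.hasFDerivAt))
    (by
      have : (fun x => ∑ i : Fin 3, ((fderiv ℝ (P γ u i) (LE x)).comp
          (LE : (Fin 3 → ℝ) →L[ℝ] Eu)) (Pi.single i 1)) = fun x => G γ u (LE x) :=
        funext hdivpt
      rw [this]; exact hG)
  rw [← funext hdivpt]
  exact h

lemma ae_eq_sandwich {α : Type*} [MeasurableSpace α] {μ : Measure α} {s t v : Set α}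
    (h1 : s ⊆ t) (h2 : t ⊆ v) (h : v =ᵐ[μ] s) : t =ᵐ[μ] s := by
  rw [ae_eq_set] at h ⊢
  constructor
  · exact measure_mono_null (diff_subset_diff_left h2) h.1
  · rw [diff_eq_empty.mpr h1, measure_empty]

lemma freq_small {g0 : ℝ → ℝ} (hg0 : Integrable g0 (volume.restrict (Ioi (0:ℝ))))
    {ε : ℝ} (hε : 0 < ε) : ∃ᶠ R in atTop, g0 R < ε := by
  by_contra h
  rw [Filter.not_frequently] at h
  simp only [not_lt] at h
  obtain ⟨Z, hZ⟩ := eventually_atTop.mp h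
  set M := max Z 0 with hM
  have hsub : Ioi M ⊆ Ioi (0:ℝ) := fun x hx => lt_of_le_of_lt (le_max_right Z 0) hx
  have hfin := hg0.hasFiniteIntegral
  have hmono : ∫⁻ z in Ioi M, (ENNReal.ofReal ε) ∂volume ≤ ∫⁻ z in Ioi M, (‖g0 z‖₊ : ℝ≥0∞) ∂volume := by
    refine lintegral_mono_ae ((ae_restrict_iff' measurableSet_Ioi).mpr
      (Eventually.of_forall fun z hz => ?_))
    have hge : ε ≤ g0 z := hZ z (le_of_lt (lt_of_le_of_lt (le_max_left Z 0) hz))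
    calc ENNReal.ofReal ε ≤ ENNReal.ofReal (g0 z) := ENNReal.ofReal_le_ofReal hge
      _ = (‖g0 z‖₊ : ℝ≥0∞) := (Real.enorm_eq_ofReal (hε.le.trans hge)).symm
  rw [setLIntegral_const, Real.volume_Ioi, ENNReal.mul_top (ENNReal.ofReal_pos.mpr hε).ne'] at hmono
  have hmono2 : ∫⁻ z in Ioi M, (‖g0 z‖₊ : ℝ≥0∞) ∂volume ≤ ∫⁻ z in Ioi 0, (‖g0 z‖₊ : ℝ≥0∞) ∂volume :=
    lintegral_mono_set hsub
  have : (⊤ : ℝ≥0∞) ≤ ∫⁻ z in Ioi 0, (‖g0 z‖₊ : ℝ≥0∞) ∂volume := le_trans hmono hmono2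
  exact absurd (lt_of_le_of_lt this hfin) (lt_irrefl _)

lemma key (a γ : ℝ) (ha : 0 < a) (u : Eu → ℝ) (hu : ContDiff ℝ (⊤ : ℕ∞) u)
    (hub : ∀ p ∈ frontier (box a) \ bot a, u p = 0)
    (hrob : ∀ p ∈ bot a, pd 2 u p + γ * u p = 0)
    (h1 : Integrable (fun p => (u p) ^ 2) (volume.restrict (box a)))
    (h2 : Integrable (fun p => gradSq u p) (volume.restrict (box a)))
    (h3 : Integrable (fun p => u p * lap u p) (volume.restrict (box a))) :
    ∫ p in box a, G γ u p = 0 := by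
  -- additional integrability
  have hb4 : ∀ p : Eu, ‖u p * pd 2 u p‖ ≤ ((u p) ^ 2 + gradSq u p) / 2 := by
    intro p
    have h := sq_pd_le_gradSq u 2 p
    rw [Real.norm_eq_abs, abs_mul]
    nlinarith [sq_nonneg (|u p| - |pd 2 u p|), sq_abs (u p), sq_abs (pd 2 u p),
      abs_nonneg (u p), abs_nonneg (pd 2 u p)]
  have h4 : Integrable (fun p => u p * pd 2 u p) (volume.restrict (box a)) := by
    refine Integrable.mono' ((h1.add h2).div_const 2)
      ((hu.continuous.mul (pd_smooth hu 2).continuous).aestronglyMeasurable) ?_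
    exact Eventually.of_forall hb4
  have h1' : Integrable (fun p => u p * u p) (volume.restrict (box a)) := by
    simpa [pow_two] using h1
  have hGbox : Integrable (fun p => G γ u p) (volume.restrict (box a)) :=
    (h3.add h2).add (h4.const_mul (2 * γ))
  have hP2box : Integrable (fun p => P γ u 2 p) (volume.restrict (box a)) :=
    h4.add (h1'.const_mul γ)
  -- transfer to pi space
  have MP := (EuclideanSpace.volume_preserving_symm_measurableEquiv_toLp (Fin 3)).symm
  have emb := (MeasurableEquiv.toLp 2 (Fin 3 → ℝ)).symm.symm.measurableEmbedding
  have hpre : ⇑(MeasurableEquiv.toLp 2 (Fin 3 → ℝ)).symm.symm ⁻¹' (box a) = ebox a := rfl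
  have htr : ∀ g : Eu → ℝ, ∫ p in box a, g p = ∫ x in ebox a, g (LE x) := by
    intro g
    rw [← MP.setIntegral_preimage_emb emb g (box a), hpre]
    rfl
  have hitr : ∀ g : Eu → ℝ, Integrable g (volume.restrict (box a)) →
      Integrable (fun x => g (LE x)) (volume.restrict (ebox a)) := by
    intro g hg
    have h := ((MP.restrict_preimage_emb emb (box a)).integrable_comp_emb emb).mpr hg
    rw [hpre] at h
    exact h
  have hGe : Integrable (fun x => G γ u (LE x)) (volume.restrict (ebox a)) := hitr _ hGbox
  have hP2e : Integrable (fun x => P γ u 2 (LE x)) (volume.restrict (ebox a)) := hitr _ hP2box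
  -- boundary vanishing helper
  have huz : ∀ p : Eu, p 0 ∈ Icc 0 a → p 1 ∈ Icc 0 a → 0 ≤ p 2 → p ∉ box a → p ∉ bot a →
      u p = 0 := fun p h0 h1 h2 hnb hnbot => hub p ⟨mem_frontier_box ha h0 h1 h2 hnb, hnbot⟩
  have hP2z : ∀ y0 y1 : ℝ, y0 ∈ Icc 0 a → y1 ∈ Icc 0 a → P γ u 2 (LE ![y0, y1, 0]) = 0 := by
    intro y0 y1 hy0 hy1
    by_cases hb : LE ![y0, y1, 0] ∈ bot a
    · have hr := hrob _ hb
      show u _ * pd 2 u _ + γ * (u _ * u _) = 0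
      have : pd 2 u (LE ![y0, y1, 0]) = -(γ * u (LE ![y0, y1, 0])) := by linarith
      rw [this]; ring
    · have hu0 : u (LE ![y0, y1, 0]) = 0 := by
        refine huz _ hy0 hy1 le_rfl ?_ hb
        rintro ⟨-, -, hz⟩
        exact lt_irrefl (0:ℝ) hz
      show u _ * pd 2 u _ + γ * (u _ * u _) = 0
      rw [hu0]; ring
  -- the top-face integral
  set Φ : ℝ → ℝ := fun R => ∫ y in Icc (fun _ : Fin 2 => (0:ℝ)) (fun _ => a),
    P γ u 2 (LE (Fin.insertNth (α := fun _ => ℝ) 2 R y)) with hΦdef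
  -- divergence theorem gives: integral over finite box equals Φ R
  have hdiv : ∀ R : ℝ, 0 < R →
      ∫ x in Icc (0 : Fin 3 → ℝ) (hiv a R), G γ u (LE x) = Φ R := by
    intro R hR
    -- integrability on the closed finite box
    have hGIcc : IntegrableOn (fun x => G γ u (LE x)) (Icc (0 : Fin 3 → ℝ) (hiv a R)) := by
      have hsub : (Set.pi univ fun i => Ioo ((0 : Fin 3 → ℝ) i) (hiv a R i)) ⊆ ebox a :=
        fun x hx => ⟨hx 0 (mem_univ _), hx 1 (mem_univ _), (hx 2 (mem_univ _)).1⟩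
      have hpiae : (Set.pi univ fun i => Ioo ((0 : Fin 3 → ℝ) i) (hiv a R i)) =ᵐ[volume]
          Icc (0 : Fin 3 → ℝ) (hiv a R) := Measure.univ_pi_Ioo_ae_eq_Icc
      rw [IntegrableOn, ← Measure.restrict_congr_set hpiae]
      exact hGe.mono_measure (Measure.restrict_mono hsub le_rfl)
    rw [divthm a γ R ha.le hR.le u hu hGIcc, Fin.sum_univ_three]
    -- face bound extraction helpers
    have hbnd : ∀ (i : Fin 3) (y : Fin 2 → ℝ),
        y ∈ Icc ((0 : Fin 3 → ℝ) ∘ i.succAbove) (hiv a R ∘ i.succAbove) →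
        ∀ j : Fin 2, 0 ≤ y j ∧ y j ≤ hiv a R (i.succAbove j) :=
      fun i y hy j => ⟨hy.1 j, hy.2 j⟩
    -- i = 0, front face (x₀ = a) and back face (x₀ = 0)
    have hz0 : ∀ c : ℝ, (c = 0 ∨ c = a) → ∀ y : Fin 2 → ℝ,
        y ∈ Icc ((0 : Fin 3 → ℝ) ∘ (0:Fin 3).succAbove) (hiv a R ∘ (0:Fin 3).succAbove) →
        P γ u 0 (LE (Fin.insertNth (α := fun _ => ℝ) 0 c y)) = 0 := by
      intro c hc y hy
      have hb0 := hbnd 0 y hy 0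
      have hb1 := hbnd 0 y hy 1
      rw [show (0:Fin 3).succAbove 0 = 1 from by decide] at hb0
      rw [show (0:Fin 3).succAbove 1 = 2 from by decide] at hb1
      rw [insertNth0]
      have hu0 : u (LE ![c, y 0, y 1]) = 0 := by
        refine huz _ ?_ ⟨hb0.1, hb0.2⟩ hb1.1 ?_ ?_
        · rcases hc with h | h <;> rw [h]
          · exact ⟨le_rfl, ha.le⟩
          · exact ⟨ha.le, le_rfl⟩
        · rintro ⟨h0, -, -⟩
          rcases hc with h | h <;> rw [show (LE ![c, y 0, y 1]) 0 = c from rfl, h] at h0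
          · exact lt_irrefl 0 h0.1
          · exact lt_irrefl a h0.2
        · rintro ⟨h0, -, -⟩
          rcases hc with h | h <;> rw [show (LE ![c, y 0, y 1]) 0 = c from rfl, h] at h0
          · exact lt_irrefl 0 h0.1
          · exact lt_irrefl a h0.2
      show u _ * pd 0 u _ = 0
      rw [hu0, zero_mul]
    -- i = 1
    have hz1 : ∀ c : ℝ, (c = 0 ∨ c = a) → ∀ y : Fin 2 → ℝ,
        y ∈ Icc ((0 : Fin 3 → ℝ) ∘ (1:Fin 3).succAbove) (hiv a R ∘ (1:Fin 3).succAbove) →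
        P γ u 1 (LE (Fin.insertNth (α := fun _ => ℝ) 1 c y)) = 0 := by
      intro c hc y hy
      have hb0 := hbnd 1 y hy 0
      have hb1 := hbnd 1 y hy 1
      rw [show (1:Fin 3).succAbove 0 = 0 from by decide] at hb0
      rw [show (1:Fin 3).succAbove 1 = 2 from by decide] at hb1
      rw [insertNth1]
      have hu0 : u (LE ![y 0, c, y 1]) = 0 := by
        refine huz _ ⟨hb0.1, hb0.2⟩ ?_ hb1.1 ?_ ?_
        · rcases hc with h | h <;> rw [h]
          · exact ⟨le_rfl, ha.le⟩
          · exact ⟨ha.le, le_rfl⟩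
        · rintro ⟨-, h0, -⟩
          rcases hc with h | h <;> rw [show (LE ![y 0, c, y 1]) 1 = c from rfl, h] at h0
          · exact lt_irrefl 0 h0.1
          · exact lt_irrefl a h0.2
        · rintro ⟨-, h0, -⟩
          rcases hc with h | h <;> rw [show (LE ![y 0, c, y 1]) 1 = c from rfl, h] at h0
          · exact lt_irrefl 0 h0.1
          · exact lt_irrefl a h0.2
      show u _ * pd 1 u _ = 0
      rw [hu0, zero_mul]
    -- i = 2 back face (z = 0)
    have hz2b : ∀ y : Fin 2 → ℝ,
        y ∈ Icc ((0 : Fin 3 → ℝ) ∘ (2:Fin 3).succAbove) (hiv a R ∘ (2:Fin 3).succAbove) →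
        P γ u 2 (LE (Fin.insertNth (α := fun _ => ℝ) 2 ((0 : Fin 3 → ℝ) 2) y)) = 0 := by
      intro y hy
      have hb0 := hbnd 2 y hy 0
      have hb1 := hbnd 2 y hy 1
      rw [show (2:Fin 3).succAbove 0 = 0 from by decide] at hb0
      rw [show (2:Fin 3).succAbove 1 = 1 from by decide] at hb1
      rw [show ((0 : Fin 3 → ℝ) 2) = 0 from rfl, insertNth2]
      exact hP2z (y 0) (y 1) ⟨hb0.1, hb0.2⟩ ⟨hb1.1, hb1.2⟩
    have e0f : (∫ y in Icc ((0 : Fin 3 → ℝ) ∘ (0:Fin 3).succAbove) (hiv a R ∘ (0:Fin 3).succAbove),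
        P γ u 0 (LE (Fin.insertNth (α := fun _ => ℝ) 0 (hiv a R 0) y))) = 0 := by
      rw [setIntegral_congr_fun measurableSet_Icc
        (fun y hy => hz0 (hiv a R 0) (Or.inr (hiv0 a R)) y hy)]
      simp
    have e0b : (∫ y in Icc ((0 : Fin 3 → ℝ) ∘ (0:Fin 3).succAbove) (hiv a R ∘ (0:Fin 3).succAbove),
        P γ u 0 (LE (Fin.insertNth (α := fun _ => ℝ) 0 ((0 : Fin 3 → ℝ) 0) y))) = 0 := by
      rw [setIntegral_congr_fun measurableSet_Icc
        (fun y hy => hz0 ((0 : Fin 3 → ℝ) 0) (Or.inl rfl) y hy)]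
      simp
    have e1f : (∫ y in Icc ((0 : Fin 3 → ℝ) ∘ (1:Fin 3).succAbove) (hiv a R ∘ (1:Fin 3).succAbove),
        P γ u 1 (LE (Fin.insertNth (α := fun _ => ℝ) 1 (hiv a R 1) y))) = 0 := by
      rw [setIntegral_congr_fun measurableSet_Icc
        (fun y hy => hz1 (hiv a R 1) (Or.inr (hiv1 a R)) y hy)]
      simp
    have e1b : (∫ y in Icc ((0 : Fin 3 → ℝ) ∘ (1:Fin 3).succAbove) (hiv a R ∘ (1:Fin 3).succAbove),
        P γ u 1 (LE (Fin.insertNth (α := fun _ => ℝ) 1 ((0 : Fin 3 → ℝ) 1) y))) = 0 := by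
      rw [setIntegral_congr_fun measurableSet_Icc
        (fun y hy => hz1 ((0 : Fin 3 → ℝ) 1) (Or.inl rfl) y hy)]
      simp
    have e2b : (∫ y in Icc ((0 : Fin 3 → ℝ) ∘ (2:Fin 3).succAbove) (hiv a R ∘ (2:Fin 3).succAbove),
        P γ u 2 (LE (Fin.insertNth (α := fun _ => ℝ) 2 ((0 : Fin 3 → ℝ) 2) y))) = 0 := by
      rw [setIntegral_congr_fun measurableSet_Icc (fun y hy => hz2b y hy)]
      simp
    have e2f : (∫ y in Icc ((0 : Fin 3 → ℝ) ∘ (2:Fin 3).succAbove) (hiv a R ∘ (2:Fin 3).succAbove),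
        P γ u 2 (LE (Fin.insertNth (α := fun _ => ℝ) 2 (hiv a R 2) y))) = Φ R := by
      have hface : hiv a R ∘ (2:Fin 3).succAbove = fun _ : Fin 2 => a := by
        funext j
        fin_cases j <;> rfl
      rw [hface, hiv2]
      rfl
    rw [e0f, e0b, e1f, e1b, e2b, e2f]
    ring
  -- set congruence to ebox ∩ {z < R}
  have hcong : ∀ R : ℝ, 0 < R →
      ((ebox a ∩ {x : Fin 3 → ℝ | x 2 < R} : Set (Fin 3 → ℝ))) =ᵐ[volume]
        (Set.pi univ fun i => Ioo ((0 : Fin 3 → ℝ) i) (hiv a R i)) := by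
    intro R hR
    refine ae_eq_sandwich ?_ ?_ (Measure.univ_pi_Ioo_ae_eq_Icc (f := fun i => (0:ℝ)) (g := hiv a R)).symm
    · intro x hx
      refine ⟨⟨?_, ?_, ?_⟩, ?_⟩
      · exact ⟨(hx 0 (mem_univ _)).1, (hx 0 (mem_univ _)).2⟩
      · exact ⟨(hx 1 (mem_univ _)).1, (hx 1 (mem_univ _)).2⟩
      · exact (hx 2 (mem_univ _)).1
      · exact (hx 2 (mem_univ _)).2
    · rintro x ⟨⟨h0, h1, h2⟩, hzR⟩
      rw [mem_Icc]
      constructor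
      · intro i; fin_cases i
        · exact h0.1.le
        · exact h1.1.le
        · exact le_of_lt h2
      · intro i; fin_cases i
        · exact h0.2.le
        · exact h1.2.le
        · exact le_of_lt hzR
  have hmeasR : ∀ R : ℝ, MeasurableSet (ebox a ∩ {x : Fin 3 → ℝ | x 2 < R}) := fun R =>
    (measurableSet_ebox a).inter (measurableSet_lt (measurable_pi_apply 2) measurable_const)
  have hIccEq : ∀ R : ℝ, 0 < R →
      ∫ x in Icc (0 : Fin 3 → ℝ) (hiv a R), G γ u (LE x)
        = ∫ x in ebox a ∩ {x : Fin 3 → ℝ | x 2 < R}, G γ u (LE x) := by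
    intro R hR
    have hpi : (Set.pi univ fun i => Ioo ((0 : Fin 3 → ℝ) i) (hiv a R i)) =ᵐ[volume]
        Icc (0 : Fin 3 → ℝ) (hiv a R) := Measure.univ_pi_Ioo_ae_eq_Icc
    exact (setIntegral_congr_set ((hcong R hR).trans hpi)).symm
  -- DCT
  have hK : Tendsto (fun R : ℝ => ∫ x in ebox a ∩ {x : Fin 3 → ℝ | x 2 < R}, G γ u (LE x))
      atTop (𝓝 (∫ x in ebox a, G γ u (LE x))) := by
    simp_rw [← integral_indicator (hmeasR _), ← integral_indicator (measurableSet_ebox a)]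
    refine tendsto_integral_filter_of_dominated_convergence
      ((ebox a).indicator (fun x => ‖G γ u (LE x)‖)) ?_ ?_ ?_ ?_
    · exact Eventually.of_forall fun R =>
        (((continuous_G hu γ).comp LE.continuous).aestronglyMeasurable).indicator (hmeasR R)
    · refine Eventually.of_forall fun R => Eventually.of_forall fun x => ?_
      by_cases hx : x ∈ ebox a ∩ {x : Fin 3 → ℝ | x 2 < R}
      · rw [indicator_of_mem hx, indicator_of_mem hx.1]
      · rw [indicator_of_notMem hx, norm_zero]
        exact indicator_nonneg (fun _ _ => norm_nonneg _) x
    · rw [integrable_indicator_iff (measurableSet_ebox a)]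
      exact hGe.norm
    · refine Eventually.of_forall fun x => ?_
      by_cases hx : x ∈ ebox a
      · have hval : (ebox a).indicator (fun y => G γ u (LE y)) x = G γ u (LE x) :=
          indicator_of_mem hx _
        have hevery : ∀ R : ℝ, x 2 < R →
            (ebox a ∩ {y : Fin 3 → ℝ | y 2 < R}).indicator (fun y => G γ u (LE y)) x
              = G γ u (LE x) := fun R hR => indicator_of_mem (Set.mem_inter hx hR) _
        rw [hval]
        refine Tendsto.congr' ?_ tendsto_const_nhds
        filter_upwards [eventually_gt_atTop (x 2)] with R hR
        exact (hevery R hR).symm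
      · have hval : (ebox a).indicator (fun y => G γ u (LE y)) x = 0 :=
          indicator_of_notMem hx _
        have hevery : ∀ R : ℝ,
            (ebox a ∩ {y : Fin 3 → ℝ | y 2 < R}).indicator (fun y => G γ u (LE y)) x = 0 :=
          fun R => indicator_of_notMem (fun hc => hx hc.1) _
        simp only [hevery, hval]
        exact tendsto_const_nhds
  have htend : Tendsto Φ atTop (𝓝 (∫ x in ebox a, G γ u (LE x))) := by
    refine hK.congr' ?_
    filter_upwards [eventually_gt_atTop (0:ℝ)] with R hR
    rw [← hIccEq R hR, hdiv R hR]
  -- Fubini bound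
  obtain ⟨g0, hg0int, hg0le⟩ : ∃ g0 : ℝ → ℝ, Integrable g0 (volume.restrict (Ioi (0:ℝ)))
      ∧ ∀ R : ℝ, ‖Φ R‖ ≤ g0 R := by
    have hsA0 : (2:Fin 3).succAbove (0:Fin 2) = 0 := by decide
    have hsA1 : (2:Fin 3).succAbove (1:Fin 2) = 1 := by decide
    set e2 := MeasurableEquiv.piFinSuccAbove (fun _ : Fin 3 => ℝ) 2 with he2
    have MP2 := volume_preserving_piFinSuccAbove (fun _ : Fin 3 => ℝ) 2
    set sq2 : Set (Fin 2 → ℝ) := Set.pi univ fun _ : Fin 2 => Ioo (0:ℝ) a with hsq2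
    set S : Set (ℝ × (Fin 2 → ℝ)) := (Ioi (0:ℝ)) ×ˢ sq2 with hS
    have he2app : ∀ x : Fin 3 → ℝ, e2 x = (x 2, fun j => x ((2:Fin 3).succAbove j)) := by
      intro x
      rw [he2]
      simp only [MeasurableEquiv.piFinSuccAbove, MeasurableEquiv.coe_mk,
        Equiv.coe_fn_symm_mk]
      rfl
    have hpre2 : ⇑e2 ⁻¹' S = ebox a := by
      ext x
      rw [mem_preimage, he2app x, hS]
      simp only [Set.mem_prod, hsq2, mem_univ_pi]
      constructor
      · rintro ⟨h2, hrest⟩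
        have h0 := hrest 0
        have h1 := hrest 1
        rw [hsA0] at h0
        rw [hsA1] at h1
        exact ⟨h0, h1, h2⟩
      · rintro ⟨h0, h1, h2⟩
        refine ⟨h2, fun j => ?_⟩
        fin_cases j
        · show x ((2:Fin 3).succAbove 0) ∈ Ioo 0 a
          rw [hsA0]; exact h0
        · show x ((2:Fin 3).succAbove 1) ∈ Ioo 0 a
          rw [hsA1]; exact h1
    have hg : Integrable
        (fun zy : ℝ × (Fin 2 → ℝ) =>
          ‖P γ u 2 (LE (Fin.insertNth (α := fun _ => ℝ) 2 zy.1 zy.2))‖)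
        (((volume : Measure ℝ).restrict (Ioi (0:ℝ))).prod
          ((volume : Measure (Fin 2 → ℝ)).restrict sq2)) := by
      rw [Measure.prod_restrict, ← Measure.volume_eq_prod]
      refine ((MP2.restrict_preimage_emb e2.measurableEmbedding S).integrable_comp_emb
        e2.measurableEmbedding).mp ?_
      rw [hpre2]
      have hcomp : ((fun zy : ℝ × (Fin 2 → ℝ) =>
          ‖P γ u 2 (LE (Fin.insertNth (α := fun _ => ℝ) 2 zy.1 zy.2))‖) ∘ ⇑e2)
          = fun x => ‖P γ u 2 (LE x)‖ := by
        funext x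
        rw [Function.comp_apply, he2app x]
        congr 2
        exact congrArg LE (Fin.insertNth_self_removeNth 2 x)
      rw [hcomp]
      exact hP2e.norm
    refine ⟨fun z => ∫ y, ‖P γ u 2 (LE (Fin.insertNth (α := fun _ => ℝ) 2 z y))‖
        ∂((volume : Measure (Fin 2 → ℝ)).restrict sq2), hg.integral_prod_left, ?_⟩
    intro R
    have hsqIcc : sq2 =ᵐ[volume] Icc (fun _ : Fin 2 => (0:ℝ)) (fun _ => a) :=
      Measure.univ_pi_Ioo_ae_eq_Icc
    have hΦR : Φ R = ∫ y in sq2, P γ u 2 (LE (Fin.insertNth (α := fun _ => ℝ) 2 R y)) :=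
      (setIntegral_congr_set hsqIcc).symm
    rw [hΦR]
    exact norm_integral_le_integral_norm _
  -- conclusion
  rw [htr]
  by_contra hKne
  set K := ∫ x in ebox a, G γ u (LE x) with hKdef
  have hεpos : 0 < ‖K‖ / 2 := by
    have : K ≠ 0 := hKne
    have := norm_pos_iff.mpr this
    linarith
  have hev : ∀ᶠ R in atTop, ‖K‖ / 2 < ‖Φ R‖ := by
    have hball := htend (Metric.ball_mem_nhds K hεpos)
    filter_upwards [hball] with R hR
    simp only [mem_preimage, Metric.mem_ball, Real.dist_eq, Real.norm_eq_abs] at hR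
    have h3 := abs_sub_abs_le_abs_sub K (Φ R)
    have h4 : |K - Φ R| = |Φ R - K| := abs_sub_comm _ _
    simp only [Real.norm_eq_abs] at hεpos ⊢
    linarith
  obtain ⟨R, hR1, hR2⟩ := ((freq_small hg0int hεpos).and_eventually hev).exists
  exact absurd (lt_of_le_of_lt (hg0le R) hR1) (not_lt.mpr hR2.le)

end Stmt4

open Stmt4 in

/-- energy inequality for a smooth solution of the heat equation
`ω_t = ν Δω` on `Ω = (0,a)² × (0,∞)` with `ω = 0` on `∂Ω ∖ Γ`, the Robin
condition `ω_z + γ ω = 0` on `Γ = {z = 0}` and decay of `ω` and `∇ω` as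
`z → ∞`:  `(1/2) d/dt ∫_Ω ω² ≤ -(ν/2) ∫_Ω |∇ω|² + 2νγ² ∫_Ω ω²`. -/
theorem stmt4 (a ν γ T : ℝ) (ha : 0 < a) (hν : 0 < ν) (hγ : 0 < γ) (hT : 0 < T)
    (ω : ℝ → EuclideanSpace ℝ (Fin 3) → ℝ)
    (hsmooth : ContDiff ℝ (⊤ : ℕ∞) (fun q : ℝ × EuclideanSpace ℝ (Fin 3) => ω q.1 q.2))
    (hpde : ∀ t ∈ Ico 0 T, ∀ p ∈ box a,
      deriv (fun s => ω s p) t = ν * lap (ω t) p)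
    (hdir : ∀ t ∈ Ico 0 T, ∀ p ∈ frontier (box a) \ bot a, ω t p = 0)
    (hrobin : ∀ t ∈ Ico 0 T, ∀ p ∈ bot a, pd 2 (ω t) p + γ * ω t p = 0)
    (hdecay : ∀ t ∈ Ico 0 T, ∀ p : EuclideanSpace ℝ (Fin 3),
      Tendsto (fun z : ℝ => ω t (p + z • EuclideanSpace.single 2 (1 : ℝ))) atTop (nhds 0))
    (hdecay' : ∀ t ∈ Ico 0 T, ∀ p : EuclideanSpace ℝ (Fin 3),
      Tendsto (fun z : ℝ => gradSq (ω t) (p + z • EuclideanSpace.single 2 (1 : ℝ)))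
        atTop (nhds 0))
    (hint1 : ∀ t ∈ Ico 0 T, Integrable (fun p => (ω t p) ^ 2) (volume.restrict (box a)))
    (hint2 : ∀ t ∈ Ico 0 T, Integrable (fun p => gradSq (ω t) p) (volume.restrict (box a)))
    (hint3 : ∀ t ∈ Ico 0 T,
      Integrable (fun p => ω t p * lap (ω t) p) (volume.restrict (box a)))
    (hdiff : ∀ t ∈ Ico 0 T,
      HasDerivAt (fun s => ∫ p in box a, (ω s p) ^ 2)
        (∫ p in box a, 2 * ω t p * deriv (fun s => ω s p) t) t) :
    ∀ t ∈ Ico 0 T, ∀ D : ℝ,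
      HasDerivAt (fun s => (1 / 2) * ∫ p in box a, (ω s p) ^ 2) D t →
        D ≤ -(ν / 2) * (∫ p in box a, gradSq (ω t) p)
              + 2 * ν * γ ^ 2 * (∫ p in box a, (ω t p) ^ 2) := by
  intro t ht D hD
  set u : EuclideanSpace ℝ (Fin 3) → ℝ := ω t with hudef
  have hu : ContDiff ℝ (⊤ : ℕ∞) u := hsmooth.comp (contDiff_const.prodMk contDiff_id)
  -- Identify D
  have hd1 := (hdiff t ht).const_mul (1/2 : ℝ)
  have hDeq : D = (1/2 : ℝ) * ∫ p in box a, 2 * ω t p * deriv (fun s => ω s p) t :=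
    hD.unique hd1
  have hcongr : ∫ p in box a, 2 * ω t p * deriv (fun s => ω s p) t
      = ∫ p in box a, (2 * ν) * (u p * lap u p) :=
    setIntegral_congr_fun (measurableSet_box a) (fun p hp => by
      rw [hpde t ht p hp]; ring)
  have hDJ : D = ν * ∫ p in box a, u p * lap u p := by
    rw [hDeq, hcongr, integral_const_mul]
    ring
  -- auxiliary integrability
  have hb4 : ∀ p : EuclideanSpace ℝ (Fin 3),
      ‖u p * pd 2 u p‖ ≤ ((u p) ^ 2 + gradSq u p) / 2 := by
    intro p
    have h := sq_pd_le_gradSq u 2 p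
    rw [Real.norm_eq_abs, abs_mul]
    nlinarith [sq_nonneg (|u p| - |pd 2 u p|), sq_abs (u p), sq_abs (pd 2 u p),
      abs_nonneg (u p), abs_nonneg (pd 2 u p)]
  have h4 : Integrable (fun p => u p * pd 2 u p) (volume.restrict (box a)) := by
    refine Integrable.mono' (((hint1 t ht).add (hint2 t ht)).div_const 2)
      ((hu.continuous.mul (pd_smooth hu 2).continuous).aestronglyMeasurable) ?_
    exact Eventually.of_forall hb4
  -- the key vanishing integral
  have hKey : ∫ p in box a, G γ u p = 0 :=
    key a γ ha u hu (hdir t ht) (hrobin t ht) (hint1 t ht) (hint2 t ht) (hint3 t ht)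
  have hsplit : (∫ p in box a, u p * lap u p) + (∫ p in box a, gradSq u p)
      + 2 * γ * (∫ p in box a, u p * pd 2 u p) = 0 := by
    have h5 : ∫ p in box a, G γ u p
        = (∫ p in box a, (u p * lap u p + gradSq u p))
          + ∫ p in box a, 2 * γ * (u p * pd 2 u p) :=
      integral_add ((hint3 t ht).add (hint2 t ht)) (h4.const_mul (2 * γ))
    rw [h5, integral_add (hint3 t ht) (hint2 t ht), integral_const_mul] at hKey
    linarith
  -- pointwise inequality
  have hmono : -(2 * γ) * (∫ p in box a, u p * pd 2 u p)
      ≤ ∫ p in box a, ((1/2 : ℝ) * gradSq u p + 2 * γ ^ 2 * (u p) ^ 2) := by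
    rw [← integral_const_mul]
    refine setIntegral_mono_on (h4.const_mul (-(2 * γ)))
      (((hint2 t ht).const_mul (1/2 : ℝ)).add ((hint1 t ht).const_mul (2 * γ ^ 2)))
      (measurableSet_box a) ?_
    intro p _
    have hg := sq_pd_le_gradSq u 2 p
    nlinarith [sq_nonneg (pd 2 u p + 2 * γ * u p)]
  have hRHS : ∫ p in box a, ((1/2 : ℝ) * gradSq u p + 2 * γ ^ 2 * (u p) ^ 2)
      = (1/2 : ℝ) * (∫ p in box a, gradSq u p) + 2 * γ ^ 2 * (∫ p in box a, (u p) ^ 2) := by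
    rw [integral_add ((hint2 t ht).const_mul (1/2 : ℝ)) ((hint1 t ht).const_mul (2 * γ ^ 2)),
      integral_const_mul, integral_const_mul]
  rw [hRHS] at hmono
  have hJle : (∫ p in box a, u p * lap u p)
      ≤ -(1/2 : ℝ) * (∫ p in box a, gradSq u p) + 2 * γ ^ 2 * (∫ p in box a, (u p) ^ 2) := by
    linarith
  have hfin := mul_le_mul_of_nonneg_left hJle hν.le
  rw [hDJ]
  nlinarith [hfin]

end
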